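/- arXiv:2203.12916 — 2 statements merged into one kernel-verified Lean document; each statement's English description precedes it below -/
import Mathlib

section
/- Let L ≥ 2 and n ≥ 2 be integers. For every m with L^{n−1} ≤ m ≤ ⌊L^n/2⌋, ξ_m(K_L^n) ≥ ξ_{L^{n−1}}(K_L^n) = (L−1)L^{n−1}. -/
/-!
Write `m = a L^K + r` with `K = n - 1`, `1 ≤ a < L` and `r < L^K`. The base-`L` formula for
`ex` satisfies `ex(a L^K + r) = ex(r) + (L-1) a K L^K + (a-1) a L^K + 2 a r`, and
`ex(r) ≤ (L-1) K r` since `ex(r)` is a degree sum in the `(L-1)K`-regular graph `K_L^K`. This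
reduces the claim to `(a-1) a L^K + 2 a r ≤ (L-1)(a L^K + r - L^K)`, which holds because
`2m ≤ L^n` forces `r = 0` as soon as `2a ≥ L`.
-/

/-- The base-`L` digit of `m` at position `j`, as an integer. -/
def dig (L m j : ℕ) : ℤ := ((Nat.digits L m).getD j 0 : ℤ)

/-- `ex_m(K_L^n)`: twice the maximum number of edges of an induced subgraph on `m`
vertices of the Hamming graph `K_L^n`, given by the explicit base-`L` formula
(it does not depend on `n`). -/
def exm (L m : ℕ) : ℤ :=
  (∑ j ∈ Finset.range (Nat.digits L m).length,
    (((L : ℤ) - 1) * dig L m j * j * (L : ℤ) ^ j + (dig L m j - 1) * dig L m j * (L : ℤ) ^ j))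
  + 2 * ∑ j ∈ Finset.range (Nat.digits L m).length, ∑ j' ∈ Finset.range j,
      dig L m j * dig L m j' * (L : ℤ) ^ j'

/-- `ξ_m(K_L^n) = (L-1) n m - ex_m(K_L^n)`. -/
def xi (L n m : ℕ) : ℤ := ((L : ℤ) - 1) * n * m - exm L m

open Finset

lemma dig_eq_div_mod {L : ℕ} (hL : 2 ≤ L) (m j : ℕ) :
    dig L m j = ((m / L ^ j % L : ℕ) : ℤ) := by
  rw [dig, Nat.getD_digits m j hL]

lemma dig_eq_zero_of_lt_pow {L m j : ℕ} (hL : 2 ≤ L) (hm : m < L ^ j) : dig L m j = 0 := by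
  rw [dig_eq_div_mod hL, Nat.div_eq_of_lt hm, Nat.zero_mod, Nat.cast_zero]

lemma dig_add_mul_pow_of_lt {L a s K j : ℕ} (hL : 2 ≤ L) (hj : j < K) :
    dig L (a * L ^ K + s) j = dig L s j := by
  rw [dig_eq_div_mod hL, dig_eq_div_mod hL, ← Nat.mod_mul_right_div_self,
    ← Nat.mod_mul_right_div_self, ← pow_succ]
  obtain ⟨c, hc⟩ : L ^ (j + 1) ∣ L ^ K := pow_dvd_pow L hj
  rw [hc, mul_comm, mul_assoc, Nat.mul_add_mod]

lemma dig_add_mul_pow_self {L a s K : ℕ} (hL : 2 ≤ L) (ha : a < L) (hs : s < L ^ K) :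
    dig L (a * L ^ K + s) K = a := by
  rw [dig_eq_div_mod hL, add_comm, Nat.add_mul_div_right _ _ (by positivity), Nat.div_eq_of_lt hs,
    zero_add, Nat.mod_eq_of_lt ha]

lemma sum_dig_mul_pow {L : ℕ} (hL : 2 ≤ L) (m K : ℕ) :
    ∑ j ∈ range K, dig L m j * (L : ℤ) ^ j = ((m % L ^ K : ℕ) : ℤ) := by
  induction K with
  | zero => simp [Nat.mod_one]
  | succ K ih =>
    rw [sum_range_succ, ih, Nat.mod_pow_succ, dig_eq_div_mod hL]
    push_cast
    ring

/-- `exm L m` with the digit sums running over the first `N` positions instead of over the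
base-`L` expansion of `m`. -/
def exmPad (L N m : ℕ) : ℤ :=
  (∑ j ∈ range N,
    (((L : ℤ) - 1) * dig L m j * j * (L : ℤ) ^ j + (dig L m j - 1) * dig L m j * (L : ℤ) ^ j))
  + 2 * ∑ j ∈ range N, ∑ j' ∈ range j, dig L m j * dig L m j' * (L : ℤ) ^ j'

lemma exmPad_succ (L N m : ℕ) :
    exmPad L (N + 1) m = exmPad L N m + ((L : ℤ) - 1) * dig L m N * N * (L : ℤ) ^ N
      + (dig L m N - 1) * dig L m N * (L : ℤ) ^ N
      + 2 * dig L m N * ∑ j ∈ range N, dig L m j * (L : ℤ) ^ j := by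
  simp only [exmPad, sum_range_succ, mul_assoc (dig L m N), ← mul_sum]
  ring

lemma exmPad_congr {L N m m' : ℕ} (h : ∀ j < N, dig L m j = dig L m' j) :
    exmPad L N m = exmPad L N m' := by
  unfold exmPad
  congr 1
  · exact sum_congr rfl fun j hj => by rw [h j (mem_range.1 hj)]
  · congr 1
    refine sum_congr rfl fun j hj => sum_congr rfl fun j' hj' => ?_
    rw [h j (mem_range.1 hj), h j' ((mem_range.1 hj').trans (mem_range.1 hj))]

lemma exmPad_eq_of_le {L N N' m : ℕ} (hL : 2 ≤ L) (hm : m < L ^ N) (hN : N ≤ N') :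
    exmPad L N' m = exmPad L N m := by
  induction N', hN using Nat.le_induction with
  | base => rfl
  | succ N' hN ih =>
    have hm' : m < L ^ N' := hm.trans_le (Nat.pow_le_pow_right (by omega) hN)
    rw [exmPad_succ, dig_eq_zero_of_lt_pow hL hm', ih]
    ring

lemma exm_eq_exmPad {L N m : ℕ} (hL : 2 ≤ L) (hm : m < L ^ N) : exm L m = exmPad L N m :=
  (exmPad_eq_of_le hL (Nat.lt_base_pow_length_digits hL)
    ((Nat.digits_length_le_iff hL m).2 hm)).symm

lemma exm_add_mul_pow {L a s K : ℕ} (hL : 2 ≤ L) (ha : a < L) (hs : s < L ^ K) :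
    exm L (a * L ^ K + s) = exm L s + ((L : ℤ) - 1) * a * K * (L : ℤ) ^ K
      + ((a : ℤ) - 1) * a * (L : ℤ) ^ K + 2 * a * s := by
  have hm : a * L ^ K + s < L ^ (K + 1) := by
    rw [pow_succ']
    nlinarith
  rw [exm_eq_exmPad hL hm, exmPad_succ, exm_eq_exmPad hL hs,
    exmPad_congr fun j hj => dig_add_mul_pow_of_lt hL hj, dig_add_mul_pow_self hL ha hs,
    sum_congr rfl fun j hj => by rw [dig_add_mul_pow_of_lt hL (mem_range.1 hj)],
    sum_dig_mul_pow hL, Nat.mod_eq_of_lt hs]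

lemma exm_zero (L : ℕ) : exm L 0 = 0 := by
  simp [exm]

lemma exm_pow {L : ℕ} (hL : 2 ≤ L) (K : ℕ) :
    exm L (L ^ K) = ((L : ℤ) - 1) * K * (L : ℤ) ^ K := by
  simpa [exm_zero] using exm_add_mul_pow (a := 1) (s := 0) hL (by omega) (pow_pos (by omega) K)

lemma two_mul_mul_le_of_le {L a T P : ℤ} (ha0 : 0 ≤ a) (ha : a < L) (hT : 0 ≤ T)
    (hTP : T ≤ P) : 2 * a * T ≤ (L - 1) * T + a * (L - a) * P := by
  have hP : 0 ≤ P := hT.trans hTP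
  rcases le_or_gt (2 * a + 1) L with h | h
  · nlinarith [mul_nonneg (sub_nonneg.2 h) hT, mul_nonneg (mul_nonneg ha0 (sub_nonneg.2 ha.le)) hP]
  · nlinarith [mul_nonneg (sub_nonneg.2 h.le) (sub_nonneg.2 hTP),
      mul_nonneg (mul_nonneg (by linarith : 0 ≤ a + 1) (by linarith : 0 ≤ L - 1 - a)) hP]

lemma exists_eq_mul_pow_add_of_lt_pow {L K s : ℕ} (hL : 2 ≤ L) (hs : s < L ^ (K + 1)) :
    ∃ a t, s = a * L ^ K + t ∧ a < L ∧ t < L ^ K :=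
  ⟨s / L ^ K, s % L ^ K, by rw [mul_comm, Nat.div_add_mod],
    Nat.div_lt_of_lt_mul (by rwa [← pow_succ]), Nat.mod_lt _ (by positivity)⟩

lemma exm_le_of_lt_pow {L : ℕ} (hL : 2 ≤ L) {K s : ℕ} (hs : s < L ^ K) :
    exm L s ≤ ((L : ℤ) - 1) * K * s := by
  induction K generalizing s with
  | zero =>
    obtain rfl : s = 0 := by simpa using hs
    simp [exm_zero]
  | succ K ih =>
    obtain ⟨a, t, rfl, ha, ht⟩ := exists_eq_mul_pow_add_of_lt_pow hL hs
    have step := two_mul_mul_le_of_le (L := L) (P := (L : ℤ) ^ K) (Nat.cast_nonneg a)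
      (by exact_mod_cast ha) (Nat.cast_nonneg t) (by exact_mod_cast ht.le)
    rw [exm_add_mul_pow hL ha ht]
    push_cast
    linarith [ih ht]

lemma mul_sub_one_mul_add_two_mul_le {L a R P : ℤ} (ha1 : 1 ≤ a) (ha : a < L) (hR : 0 ≤ R)
    (hP : 0 ≤ P) (hc : 2 * a * P + 2 * R ≤ L * P) :
    (a - 1) * a * P + 2 * a * R ≤ (L - 1) * (a * P + R - P) := by
  have hR' : 0 ≤ (L - 1 - 2 * a) * R := by
    rcases le_or_gt (2 * a + 1) L with h | h
    · exact mul_nonneg (by linarith) hR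
    · obtain rfl : R = 0 := by nlinarith
      simp
  nlinarith [mul_nonneg (mul_nonneg (sub_nonneg.2 ha1) (by linarith : 0 ≤ L - 1 - a)) hP]

theorem stmt6_general (L n : ℕ) (hL : 2 ≤ L)
    (m : ℕ) (hm1 : L ^ (n - 1) ≤ m) (hm2 : m ≤ L ^ n / 2) :
    xi L n (L ^ (n - 1)) ≤ xi L n m ∧
      xi L n (L ^ (n - 1)) = ((L : ℤ) - 1) * (L : ℤ) ^ (n - 1) := by
  obtain ⟨K, rfl⟩ : ∃ K, n = K + 1 :=
    Nat.exists_eq_succ_of_ne_zero (by rintro rfl; simp at hm1 hm2; omega)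
  rw [Nat.add_sub_cancel] at hm1 ⊢
  have hxi : xi L (K + 1) (L ^ K) = ((L : ℤ) - 1) * (L : ℤ) ^ K := by
    rw [xi, exm_pow hL]
    push_cast
    ring
  refine ⟨?_, hxi⟩
  have hP : 0 < L ^ K := by positivity
  have h2m : 2 * m ≤ L * L ^ K := by
    rw [pow_succ'] at hm2; omega
  obtain ⟨a, r, rfl, ha, hr⟩ := exists_eq_mul_pow_add_of_lt_pow (K := K) (s := m) hL (by
    rw [pow_succ']; omega)
  have ha1 : 1 ≤ a := Nat.pos_of_ne_zero (by rintro rfl; omega)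
  have hquad := mul_sub_one_mul_add_two_mul_le (L := L) (a := a) (P := (L : ℤ) ^ K) (R := r)
    (by exact_mod_cast ha1) (by exact_mod_cast ha) (Nat.cast_nonneg r) (by positivity)
    (by norm_cast; linarith)
  rw [hxi, xi, exm_add_mul_pow hL ha hr]
  push_cast
  linarith [exm_le_of_lt_pow hL hr]

theorem stmt6 (L n : ℕ) (hL : 2 ≤ L) (hn : 2 ≤ n)
    (m : ℕ) (hm1 : L ^ (n - 1) ≤ m) (hm2 : m ≤ L ^ n / 2) :
    xi L n (L ^ (n - 1)) ≤ xi L n m ∧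
      xi L n (L ^ (n - 1)) = ((L : ℤ) - 1) * (L : ℤ) ^ (n - 1) :=
  stmt6_general L n hL m hm1 hm2
end

section
/- Let L be odd, L ≥ 3, n ≥ 2, and 0 ≤ j ≤ n−2. Then ξ_{Σ_{i=0}^{j+1} ⌊L/2⌋ L^{n−1−i}}(K_L^n) − ξ_{Σ_{i=0}^{j} ⌊L/2⌋ L^{n−1−i}}(K_L^n) = ξ_{⌊L/2⌋ L^{n−2−j}}(K_L^{n−1−j}) ≥ 0, where ξ_m(K_L^N) = (L−1)Nm − ex_m(K_L^N) with ex_m given by the standard base-L formula. -/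
/-!
Peeling off the lowest base-`L` digit gives the recursion
`ex(d + L m) = L ex(m) + (L - 1) L m + (d - 1) d + 2 d s(m)`, with `s` the digit sum, hence
`ξ_{n+1}(d + L m) = L ξ_n(m) + (L - 1)(n + 1) d - (d - 1) d - 2 d s(m)`.
In particular trailing zeros only multiply `ξ` by powers of `L`. Writing `L = 2c + 1` and
`q = n - 2 - j`, both sides of the identity become `L^q` times a one-digit correction, and since
the top `j + 1` digits `c` have digit sum `(j + 1) c`, both equal `L^q c (c + 1) ≥ 0`.
-/

open Finset

lemma sum_range_length_getD_mul_pow (x : ℕ) (l : List ℕ) :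
    ∑ j ∈ range l.length, (l.getD j 0 : ℤ) * (x : ℤ) ^ j = Nat.ofDigits x l := by
  induction l with
  | nil => simp
  | cons a l ih =>
    rw [List.length_cons, sum_range_succ', Nat.ofDigits_cons]
    simp only [List.getD_cons_succ, List.getD_cons_zero, pow_succ, pow_zero, mul_one]
    push_cast [← ih, mul_sum]
    rw [add_comm]; congr 1
    exact sum_congr rfl fun j _ => by ring

lemma exm_add_mul {L d : ℕ} (hL : 1 < L) (hd : d < L) (m : ℕ) :
    exm L (d + L * m) = L * exm L m + ((L : ℤ) - 1) * L * m + ((d : ℤ) - 1) * d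
      + 2 * d * (Nat.digits L m).sum := by
  by_cases h0 : d = 0 ∧ m = 0
  · obtain ⟨rfl, rfl⟩ := h0
    simp [exm]
  have hm := sum_range_length_getD_mul_pow L (Nat.digits L m)
  have hs := sum_range_length_getD_mul_pow 1 (Nat.digits L m)
  rw [Nat.ofDigits_digits] at hm
  simp only [Nat.ofDigits_one, Nat.cast_one, one_pow, mul_one] at hs
  unfold exm dig
  rw [Nat.digits_add L hL d m hd (by tauto)]
  generalize Nat.digits L m = l at hm hs
  set D : ℕ → ℤ := fun j => (l.getD j 0 : ℤ)
  simp only [List.length_cons, sum_range_succ', List.getD_cons_succ, List.getD_cons_zero,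
    sum_range_zero, pow_zero, pow_succ, Nat.cast_add, Nat.cast_one, Nat.cast_zero]
  have hlow : ∑ j ∈ range l.length,
      (((L : ℤ) - 1) * D j * (j + 1) * (L ^ j * L) + (D j - 1) * D j * (L ^ j * L))
      = L * ∑ j ∈ range l.length, (((L : ℤ) - 1) * D j * j * L ^ j + (D j - 1) * D j * L ^ j)
        + ((L : ℤ) - 1) * L * ∑ j ∈ range l.length, D j * L ^ j := by
    rw [mul_sum, mul_sum, ← sum_add_distrib]
    exact sum_congr rfl fun _ _ => by ring
  have hcross : ∑ j ∈ range l.length,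
      (∑ j' ∈ range j, D j * D j' * (L ^ j' * L) + D j * d * 1)
      = L * ∑ j ∈ range l.length, ∑ j' ∈ range j, D j * D j' * L ^ j'
        + d * ∑ j ∈ range l.length, D j := by
    rw [mul_sum, mul_sum, ← sum_add_distrib]
    refine sum_congr rfl fun _ _ => ?_
    rw [mul_sum]
    congr 1
    · exact sum_congr rfl fun _ _ => by ring
    · ring
  rw [hlow, hcross, hm, hs]
  ring

lemma xi_succ_add_mul {L d : ℕ} (hL : 1 < L) (hd : d < L) (n m : ℕ) :
    xi L (n + 1) (d + L * m) = L * xi L n m + ((L : ℤ) - 1) * (n + 1) * d - ((d : ℤ) - 1) * d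
      - 2 * d * (Nat.digits L m).sum := by
  unfold xi
  rw [exm_add_mul hL hd]
  push_cast
  ring

lemma xi_succ_mul {L : ℕ} (hL : 1 < L) (n m : ℕ) : xi L (n + 1) (L * m) = L * xi L n m := by
  simpa using xi_succ_add_mul hL (Nat.zero_lt_of_lt hL) n m

lemma xi_add_pow_mul {L : ℕ} (hL : 1 < L) (n q m : ℕ) :
    xi L (n + q) (L ^ q * m) = L ^ q * xi L n m := by
  induction q with
  | zero => simp
  | succ q ih => rw [← add_assoc, pow_succ', mul_assoc, xi_succ_mul hL, ih]; ring

lemma digits_sum_ofDigits_replicate {L c : ℕ} (hL : 1 < L) (hc : c ≠ 0) (hcL : c < L) (k : ℕ) :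
    (Nat.digits L (Nat.ofDigits L (List.replicate k c))).sum = k * c := by
  rw [Nat.digits_ofDigits L hL _ (fun _ h => List.eq_of_mem_replicate h ▸ hcL)
    (fun h => by rwa [List.getLast_replicate]), List.sum_replicate, smul_eq_mul]

lemma sum_range_mul_pow_eq_pow_mul_ofDigits_replicate (L c q k : ℕ) :
    ∑ i ∈ range k, c * L ^ (q + k - 1 - i) = L ^ q * Nat.ofDigits L (List.replicate k c) := by
  induction k generalizing q with
  | zero => simp
  | succ k ih =>
    have hhigh : ∑ i ∈ range k, c * L ^ (q + (k + 1) - 1 - i)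
        = ∑ i ∈ range k, c * L ^ (q + 1 + k - 1 - i) :=
      sum_congr rfl fun i _ => by congr 2; omega
    rw [sum_range_succ, hhigh, ih, List.replicate_succ, Nat.ofDigits_cons,
      show q + (k + 1) - 1 - k = q by omega]
    ring

theorem stmt19 (L n j : ℕ) (hodd : Odd L) (hL : 3 ≤ L) (hn : 2 ≤ n) (hj : j ≤ n - 2) :
    xi L n (∑ i ∈ Finset.range (j + 2), (L / 2) * L ^ (n - 1 - i))
        - xi L n (∑ i ∈ Finset.range (j + 1), (L / 2) * L ^ (n - 1 - i))
      = xi L (n - 1 - j) ((L / 2) * L ^ (n - 2 - j)) ∧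
    0 ≤ xi L (n - 1 - j) ((L / 2) * L ^ (n - 2 - j)) := by
  obtain ⟨c, hc⟩ := hodd
  obtain ⟨q, rfl⟩ : ∃ q, n = q + (j + 2) := ⟨n - 2 - j, by omega⟩
  have hL1 : 1 < L := by omega
  have hcL : c < L := by omega
  set R := Nat.ofDigits L (List.replicate (j + 1) c)
  have hlong : ∑ i ∈ range (j + 2), c * L ^ (q + (j + 2) - 1 - i) = L ^ q * (c + L * R) :=
    sum_range_mul_pow_eq_pow_mul_ofDigits_replicate L c q (j + 2)
  have hshort : ∑ i ∈ range (j + 1), c * L ^ (q + (j + 2) - 1 - i) = L ^ q * (L * R) := by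
    rw [← mul_assoc, ← pow_succ, ← sum_range_mul_pow_eq_pow_mul_ofDigits_replicate]
    exact sum_congr rfl fun i _ => by congr 2; omega
  have hsingle : xi L (0 + 1 + q) (L ^ q * (c + L * 0)) = L ^ q * (c * (c + 1)) := by
    have hxi0 : xi L 0 0 = 0 := by simp [xi, exm]
    rw [xi_add_pow_mul hL1, xi_succ_add_mul hL1 hcL, hxi0, Nat.digits_zero, List.sum_nil]
    subst hc; push_cast; ring
  rw [show L / 2 = c by omega, show q + (j + 2) - 1 - j = 0 + 1 + q by omega,
    show c * L ^ (q + (j + 2) - 2 - j) = L ^ q * (c + L * 0) by rw [mul_zero, add_zero,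
      mul_comm, show q + (j + 2) - 2 - j = q by omega],
    hsingle, hlong, hshort, show q + (j + 2) = j + 1 + 1 + q by omega]
  rw [xi_add_pow_mul hL1, xi_add_pow_mul hL1, xi_succ_add_mul hL1 hcL, xi_succ_mul hL1,
    digits_sum_ofDigits_replicate hL1 (by omega) hcL]
  exact ⟨by subst hc; push_cast; ring, by positivity⟩
end
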